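/- arXiv:1712.05989 — 2 statements merged into one kernel-verified Lean document; each statement's English description precedes it below -/
import Mathlib

section
/- Let L ≥ 1, N ≥ 2, σ > 0 and α : Fin L → ℝ with α i > 0 for all i; set T = ∑_i (α i)². Define the symmetric real (L+1)×(L+1) matrix F₂ by F₂(0,0) = (2T/σ²) ∑_{n=0}^{N−1}(2πn)², F₂(0,i) = F₂(i,0) = (2 (α i)²/σ²) ∑_{n=0}^{N−1} 2πn for 1 ≤ i ≤ L, and F₂(i,k) = (2N(α i)²/σ²) if i = k and 0 otherwise for 1 ≤ i,k ≤ L. Then F₂ is invertible and the Cramér–Rao lower bound for the carrier frequency offset is (F₂⁻¹)(0,0) = 3σ² / (2π² T N(N²−1)). -/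
open scoped BigOperators

private lemma aux_sum_id (N : ℕ) : ∑ n ∈ Finset.range N, (n : ℝ) = N * (N - 1) / 2 := by
  induction N with
  | zero => simp
  | succ n ih => rw [Finset.sum_range_succ, ih]; push_cast; ring

private lemma aux_sum_sq (N : ℕ) :
    ∑ n ∈ Finset.range N, (n : ℝ)^2 = N * (N - 1) * (2 * N - 1) / 6 := by
  induction N with
  | zero => simp
  | succ n ih => rw [Finset.sum_range_succ, ih]; push_cast; ring

/-- The Fisher information sub-matrix F₂ for (Δf, β₁, …, β_L) is invertible and the
CRLB for the carrier frequency offset is (F₂⁻¹)(0,0) = 3σ²/(2π²TN(N²−1)), where T = ∑ᵢ αᵢ². -/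
theorem crlb_cfo
    (L N : ℕ) (hL : 1 ≤ L) (hN : 2 ≤ N)
    (σ : ℝ) (hσ : 0 < σ) (α : Fin L → ℝ) (hα : ∀ i, 0 < α i)
    (T : ℝ) (hT : T = ∑ i : Fin L, (α i)^2)
    (F₂ : Matrix (Fin (L + 1)) (Fin (L + 1)) ℝ)
    (h00 : F₂ 0 0 = (2 * T / σ^2) * ∑ n ∈ Finset.range N, (2 * Real.pi * (n : ℝ))^2)
    (h0i : ∀ i : Fin L, F₂ 0 i.succ = (2 * (α i)^2 / σ^2) * ∑ n ∈ Finset.range N, 2 * Real.pi * (n : ℝ))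
    (hi0 : ∀ i : Fin L, F₂ i.succ 0 = (2 * (α i)^2 / σ^2) * ∑ n ∈ Finset.range N, 2 * Real.pi * (n : ℝ))
    (hik : ∀ i k : Fin L, F₂ i.succ k.succ = if i = k then 2 * (N : ℝ) * (α i)^2 / σ^2 else 0) :
    IsUnit F₂.det
    ∧ F₂⁻¹ 0 0 = 3 * σ^2 / (2 * Real.pi^2 * T * (N : ℝ) * ((N : ℝ)^2 - 1)) := by
  have hπ : Real.pi ≠ 0 := Real.pi_ne_zero
  have hσ2 : σ ≠ 0 := ne_of_gt hσ
  have hN2 : (2 : ℝ) ≤ (N : ℝ) := by exact_mod_cast hN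
  have hN0 : (N : ℝ) ≠ 0 := by positivity
  have hN1 : (N : ℝ)^2 - 1 ≠ 0 := by nlinarith
  have hTpos : 0 < T := by
    rw [hT]
    exact Finset.sum_pos (fun i _ => pow_pos (hα i) 2) ⟨⟨0, hL⟩, Finset.mem_univ _⟩
  have hTne : T ≠ 0 := ne_of_gt hTpos
  have hαne : ∀ i, α i ≠ 0 := fun i => ne_of_gt (hα i)
  -- sums
  have hS1 : ∑ n ∈ Finset.range N, 2 * Real.pi * (n : ℝ) = Real.pi * N * (N - 1) := by
    rw [← Finset.mul_sum, aux_sum_id]; ring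
  have hS2 : ∑ n ∈ Finset.range N, (2 * Real.pi * (n : ℝ))^2
      = 4 * Real.pi^2 * (N * (N - 1) * (2 * N - 1) / 6) := by
    have : ∀ n ∈ Finset.range N, (2 * Real.pi * (n : ℝ))^2 = 4 * Real.pi^2 * (n : ℝ)^2 := by
      intro n _; ring
    rw [Finset.sum_congr rfl this, ← Finset.mul_sum, aux_sum_sq]
  set π := Real.pi with hπdef
  set c : ℝ := 3 * σ^2 / (2 * π^2 * T * (N : ℝ) * ((N : ℝ)^2 - 1)) with hc
  set G : Matrix (Fin (L + 1)) (Fin (L + 1)) ℝ :=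
    Matrix.of (Fin.cons (Fin.cons c (fun _ => -(π * ((N:ℝ) - 1)) * c))
      (fun i => Fin.cons (-(π * ((N:ℝ) - 1)) * c)
        (fun k => (if i = k then σ^2 / (2 * (N:ℝ) * (α i)^2) else 0) + (π * ((N:ℝ)-1))^2 * c)))
    with hG
  have hmul : F₂ * G = 1 := by
    ext i j
    rw [Matrix.mul_apply, Fin.sum_univ_succ]
    refine Fin.cases ?_ (fun i => ?_) i <;> refine Fin.cases ?_ (fun j => ?_) j
    · -- (0,0)
      simp only [hG, Matrix.of_apply, Fin.cons_zero, Fin.cons_succ, h00, h0i, hS1, hS2,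
        Matrix.one_apply_eq]
      have hsum : ∑ x : Fin L, 2 * (α x)^2 / σ^2 * (π * ↑N * (↑N - 1)) * (-(π * (↑N - 1)) * c)
          = T * (2 / σ^2 * (π * ↑N * (↑N - 1)) * (-(π * (↑N - 1)) * c)) := by
        rw [Finset.sum_congr rfl (fun i (_ : i ∈ Finset.univ) =>
          (by ring : 2 * (α i)^2 / σ^2 * (π * ↑N * (↑N - 1)) * (-(π * (↑N - 1)) * c)
            = (α i)^2 * (2 / σ^2 * (π * ↑N * (↑N - 1)) * (-(π * (↑N - 1)) * c)))),
          ← Finset.sum_mul, ← hT]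
      rw [hsum, hc]
      field_simp
      ring
    · -- (0, j+1)
      simp only [hG, Matrix.of_apply, Fin.cons_zero, Fin.cons_succ, h00, h0i, hS1, hS2]
      have h1 : (1 : Matrix (Fin (L+1)) (Fin (L+1)) ℝ) 0 j.succ = 0 :=
        Matrix.one_apply_ne (Fin.succ_ne_zero j).symm
      rw [h1]
      have hsum : ∑ x : Fin L, 2 * (α x)^2 / σ^2 * (π * ↑N * (↑N - 1)) *
            ((if x = j then σ^2 / (2 * ↑N * (α x)^2) else 0) + (π * (↑N-1))^2 * c)
          = π * (↑N - 1) + T * (2 / σ^2 * (π * ↑N * (↑N - 1)) * ((π * (↑N-1))^2 * c)) := by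
        have hsplit : ∀ x : Fin L, 2 * (α x)^2 / σ^2 * (π * ↑N * (↑N - 1)) *
              ((if x = j then σ^2 / (2 * ↑N * (α x)^2) else 0) + (π * (↑N-1))^2 * c)
            = (if x = j then 2 * (α x)^2 / σ^2 * (π * ↑N * (↑N - 1)) * (σ^2 / (2 * ↑N * (α x)^2)) else 0)
              + (α x)^2 * (2 / σ^2 * (π * ↑N * (↑N - 1)) * ((π * (↑N-1))^2 * c)) := by
          intro x
          by_cases h : x = j <;> simp [h] <;> ring
        rw [Finset.sum_congr rfl fun x _ => hsplit x, Finset.sum_add_distrib,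
          Finset.sum_ite_eq' Finset.univ j, ← Finset.sum_mul, ← hT]
        simp only [Finset.mem_univ, if_true]
        have hαj : α j ≠ 0 := hαne j
        have : 2 * (α j)^2 / σ^2 * (π * ↑N * (↑N - 1)) * (σ^2 / (2 * ↑N * (α j)^2))
            = π * (↑N - 1) := by
          field_simp
        rw [this]
      rw [hsum, hc]
      field_simp
      ring
    · -- (i+1, 0)
      simp only [hG, Matrix.of_apply, Fin.cons_zero, Fin.cons_succ, hi0, hik, hS1]
      have h1 : (1 : Matrix (Fin (L+1)) (Fin (L+1)) ℝ) i.succ 0 = 0 :=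
        Matrix.one_apply_ne (Fin.succ_ne_zero i)
      rw [h1]
      have hsum : ∑ x : Fin L, (if i = x then 2 * ↑N * (α i)^2 / σ^2 else 0) *
            (-(π * (↑N - 1)) * c)
          = 2 * ↑N * (α i)^2 / σ^2 * (-(π * (↑N - 1)) * c) := by
        rw [Finset.sum_congr rfl (fun x _ => by rw [ite_mul, zero_mul]),
          Finset.sum_ite_eq Finset.univ i]
        simp
      rw [hsum]
      field_simp
      ring
    · -- (i+1, j+1)
      simp only [hG, Matrix.of_apply, Fin.cons_zero, Fin.cons_succ, hi0, hik, hS1]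
      have h1 : (1 : Matrix (Fin (L+1)) (Fin (L+1)) ℝ) i.succ j.succ
          = if i = j then 1 else 0 := by
        rw [Matrix.one_apply]
        simp [Fin.succ_inj]
      rw [h1]
      have hsum : ∑ x : Fin L, (if i = x then 2 * ↑N * (α i)^2 / σ^2 else 0) *
            ((if x = j then σ^2 / (2 * ↑N * (α x)^2) else 0) + (π * (↑N-1))^2 * c)
          = 2 * ↑N * (α i)^2 / σ^2 *
            ((if i = j then σ^2 / (2 * ↑N * (α i)^2) else 0) + (π * (↑N-1))^2 * c) := by
        rw [Finset.sum_congr rfl (fun x _ => by rw [ite_mul, zero_mul]),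
          Finset.sum_ite_eq Finset.univ i]
        simp
      rw [hsum]
      have hαi : α i ≠ 0 := hαne i
      by_cases h : i = j
      · subst h
        simp only [if_true]
        field_simp
        ring
      · simp only [h, if_false]
        field_simp
        ring
  have hdet : IsUnit F₂.det := Matrix.isUnit_det_of_right_inverse hmul
  refine ⟨hdet, ?_⟩
  rw [Matrix.inv_eq_right_inv hmul]
  simp [hG, hc]
end

section
/- Let L ≥ 1, N ≥ 2, σ > 0 and α : Fin L → ℝ with α i > 0 for all i; set T = ∑_i (α i)². Define the symmetric real (L+1)×(L+1) matrix F₂ by F₂(0,0) = (2T/σ²) ∑_{n=0}^{N−1}(2πn)², F₂(0,i) = F₂(i,0) = (2 (α i)²/σ²) ∑_{n=0}^{N−1} 2πn for 1 ≤ i ≤ L, and F₂(i,k) = (2N(α i)²/σ²) if i = k and 0 otherwise for 1 ≤ i,k ≤ L. Then F₂ is invertible and, for every 1 ≤ i ≤ L, the Cramér–Rao lower bound for the phase offset β_i is (F₂⁻¹)(i,i) = σ²/(2N(α i)²) + 3σ²(N−1)/(2 T N(N+1)). -/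
open scoped BigOperators

set_option maxHeartbeats 1000000

lemma sum_id_real (N : ℕ) : ∑ n ∈ Finset.range N, (n:ℝ) = N*(N-1)/2 := by
  induction N with
  | zero => simp
  | succ n ih => rw [Finset.sum_range_succ, ih]; push_cast; ring

lemma sum_sq_real (N : ℕ) : ∑ n ∈ Finset.range N, (n:ℝ)^2 = N*(N-1)*(2*N-1)/6 := by
  induction N with
  | zero => simp
  | succ n ih => rw [Finset.sum_range_succ, ih]; push_cast; ring

/-- The Fisher information sub-matrix F₂ for (Δf, β₁, …, β_L) is invertible and the
CRLB for each phase offset βᵢ is (F₂⁻¹)(i,i) = σ²/(2Nαᵢ²) + 3σ²(N−1)/(2TN(N+1)). -/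
theorem crlb_phase_offset
    (L N : ℕ) (hL : 1 ≤ L) (hN : 2 ≤ N)
    (σ : ℝ) (hσ : 0 < σ) (α : Fin L → ℝ) (hα : ∀ i, 0 < α i)
    (T : ℝ) (hT : T = ∑ i : Fin L, (α i)^2)
    (F₂ : Matrix (Fin (L + 1)) (Fin (L + 1)) ℝ)
    (h00 : F₂ 0 0 = (2 * T / σ^2) * ∑ n ∈ Finset.range N, (2 * Real.pi * (n : ℝ))^2)
    (h0i : ∀ i : Fin L, F₂ 0 i.succ = (2 * (α i)^2 / σ^2) * ∑ n ∈ Finset.range N, 2 * Real.pi * (n : ℝ))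
    (hi0 : ∀ i : Fin L, F₂ i.succ 0 = (2 * (α i)^2 / σ^2) * ∑ n ∈ Finset.range N, 2 * Real.pi * (n : ℝ))
    (hik : ∀ i k : Fin L, F₂ i.succ k.succ = if i = k then 2 * (N : ℝ) * (α i)^2 / σ^2 else 0) :
    IsUnit F₂.det
    ∧ ∀ i : Fin L, F₂⁻¹ i.succ i.succ
        = σ^2 / (2 * (N : ℝ) * (α i)^2)
          + 3 * σ^2 * ((N : ℝ) - 1) / (2 * T * (N : ℝ) * ((N : ℝ) + 1)) := by
  have hπ : Real.pi ≠ 0 := Real.pi_ne_zero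
  have hσ' : σ ≠ 0 := ne_of_gt hσ
  have hNr : (2:ℝ) ≤ (N:ℝ) := by exact_mod_cast hN
  have hN0 : (N:ℝ) ≠ 0 := by positivity
  have hN1 : (N:ℝ) - 1 ≠ 0 := by nlinarith
  have hN1' : (N:ℝ) + 1 ≠ 0 := by positivity
  have hT0 : 0 < T := by
    rw [hT]
    have : (0:ℝ) < (α ⟨0, hL⟩)^2 := pow_pos (hα _) 2
    calc (0:ℝ) < (α ⟨0, hL⟩)^2 := this
    _ ≤ _ := Finset.single_le_sum (f := fun i => (α i)^2)
        (fun i _ => by positivity) (Finset.mem_univ _)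
  have hT' : T ≠ 0 := ne_of_gt hT0
  have hαne : ∀ i, α i ≠ 0 := fun i => ne_of_gt (hα i)
  -- values of the two sums
  have hS1 : ∑ n ∈ Finset.range N, 2 * Real.pi * (n : ℝ) = Real.pi * N * ((N:ℝ) - 1) := by
    rw [← Finset.mul_sum, sum_id_real]; ring
  have hS2 : ∑ n ∈ Finset.range N, (2 * Real.pi * (n : ℝ))^2
      = 4 * Real.pi^2 * ((N:ℝ)*((N:ℝ)-1)*(2*(N:ℝ)-1)/6) := by
    have : ∀ n ∈ Finset.range N, (2 * Real.pi * (n : ℝ))^2 = 4*Real.pi^2 * (n:ℝ)^2 := by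
      intro n _; ring
    rw [Finset.sum_congr rfl this, ← Finset.mul_sum, sum_sq_real]
  -- the Schur complement
  obtain ⟨s, hs_def⟩ : ∃ s : ℝ, s = 2 * T / σ^2 * (Real.pi^2 * (N:ℝ) * ((N:ℝ)-1) * ((N:ℝ)+1) / 3) :=
    ⟨_, rfl⟩
  have hs0 : 0 < s := by
    rw [hs_def]
    have h1 : (0:ℝ) < (N:ℝ) - 1 := by nlinarith
    have h2 : (0:ℝ) < (N:ℝ) := by linarith
    have h3 : (0:ℝ) < (N:ℝ) + 1 := by linarith
    have := Real.pi_pos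
    positivity
  have hs' : s ≠ 0 := ne_of_gt hs0
  -- the explicit inverse
  obtain ⟨G, hG00, hG0i, hGi0, hGik⟩ :
      ∃ G : Matrix (Fin (L+1)) (Fin (L+1)) ℝ,
        G 0 0 = 1/s
        ∧ (∀ k : Fin L, G 0 k.succ = -(Real.pi * ((N:ℝ)-1)) / s)
        ∧ (∀ i : Fin L, G i.succ 0 = -(Real.pi * ((N:ℝ)-1)) / s)
        ∧ (∀ i k : Fin L, G i.succ k.succ
            = (if i = k then σ^2/(2*(N:ℝ)*(α i)^2) else 0) + Real.pi^2 * ((N:ℝ)-1)^2 / s) :=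
    by
    refine ⟨Matrix.of (fun p =>
      Fin.cases
        (Fin.cases (1/s) (fun _ => -(Real.pi * ((N:ℝ)-1)) / s))
        (fun i => Fin.cases (-(Real.pi * ((N:ℝ)-1)) / s)
          (fun k => (if i = k then σ^2/(2*(N:ℝ)*(α i)^2) else 0)
            + Real.pi^2 * ((N:ℝ)-1)^2 / s))
        p), ?_, fun k => ?_, fun i => ?_, fun i k => ?_⟩ <;>
    simp [Matrix.of_apply]
  have hFG : F₂ * G = 1 := by
    ext p q
    rw [Matrix.mul_apply, Fin.sum_univ_succ]
    induction p using Fin.cases with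
    | zero =>
      induction q using Fin.cases with
      | zero =>
        simp only [hG00, hGi0, h00, h0i, hS1, hS2, Matrix.one_apply_eq]
        have : ∀ i : Fin L,
            2 * (α i)^2 / σ^2 * (Real.pi * N * ((N:ℝ)-1)) * (-(Real.pi * ((N:ℝ)-1)) / s)
            = (2 / σ^2 * (Real.pi * N * ((N:ℝ)-1)) * (-(Real.pi * ((N:ℝ)-1)) / s)) * (α i)^2 := by
          intro i; ring
        rw [Finset.sum_congr rfl (fun i _ => this i), ← Finset.mul_sum, ← hT, hs_def]
        field_simp
        ring
      | succ k =>
        simp only [hG0i, hGik, h00, h0i, hS1, hS2]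
        rw [Matrix.one_apply_ne (by simp [Fin.ext_iff])]
        have : ∀ i : Fin L,
            2 * (α i)^2 / σ^2 * (Real.pi * N * ((N:ℝ)-1)) *
              ((if i = k then σ^2/(2*(N:ℝ)*(α i)^2) else 0) + Real.pi^2 * ((N:ℝ)-1)^2 / s)
            = (if i = k then 2 * (α i)^2 / σ^2 * (Real.pi * N * ((N:ℝ)-1)) * (σ^2/(2*(N:ℝ)*(α i)^2)) else 0)
              + (2 / σ^2 * (Real.pi * N * ((N:ℝ)-1)) * (Real.pi^2 * ((N:ℝ)-1)^2 / s)) * (α i)^2 := by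
          intro i
          by_cases h : i = k <;> simp [h] <;> ring
        rw [Finset.sum_congr rfl (fun i _ => this i), Finset.sum_add_distrib,
          Finset.sum_ite_eq' Finset.univ k, ← Finset.mul_sum, ← hT, hs_def]
        simp only [Finset.mem_univ, if_true]
        have hk := hαne k
        field_simp
        ring
    | succ i =>
      induction q using Fin.cases with
      | zero =>
        simp only [hG00, hGi0, hi0, hik]
        rw [Matrix.one_apply_ne (by simp [Fin.ext_iff])]
        have : ∀ j : Fin L,
            (if i = j then 2 * (N:ℝ) * (α i)^2 / σ^2 else 0) * (-(Real.pi * ((N:ℝ)-1)) / s)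
            = (if i = j then 2 * (N:ℝ) * (α i)^2 / σ^2 * (-(Real.pi * ((N:ℝ)-1)) / s) else 0) := by
          intro j; by_cases h : i = j <;> simp [h]
        rw [Finset.sum_congr rfl (fun j _ => this j), Finset.sum_ite_eq Finset.univ i, hS1]
        simp only [Finset.mem_univ, if_true]
        field_simp
        ring
      | succ k =>
        simp only [hG0i, hGik, hi0, hik, hS1]
        have h1 : (1 : Matrix (Fin (L+1)) (Fin (L+1)) ℝ) i.succ k.succ
            = if i = k then 1 else 0 := by
          rw [Matrix.one_apply]
          simp [Fin.succ_inj]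
        rw [h1]
        have : ∀ j : Fin L,
            (if i = j then 2 * (N:ℝ) * (α i)^2 / σ^2 else 0) *
              ((if j = k then σ^2/(2*(N:ℝ)*(α j)^2) else 0) + Real.pi^2 * ((N:ℝ)-1)^2 / s)
            = (if i = j then 2 * (N:ℝ) * (α i)^2 / σ^2 *
                ((if j = k then σ^2/(2*(N:ℝ)*(α j)^2) else 0) + Real.pi^2 * ((N:ℝ)-1)^2 / s) else 0) := by
          intro j; by_cases h : i = j <;> simp [h]
        rw [Finset.sum_congr rfl (fun j _ => this j), Finset.sum_ite_eq Finset.univ i]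
        simp only [Finset.mem_univ, if_true]
        by_cases h : i = k
        · subst h
          simp only [if_true]
          have hi := hαne i
          field_simp
          ring
        · simp only [h, if_false]
          field_simp
          ring
  have hdet : IsUnit F₂.det := Matrix.isUnit_det_of_right_inverse hFG
  refine ⟨hdet, fun i => ?_⟩
  rw [Matrix.inv_eq_right_inv hFG, hGik i i]
  simp only [if_true]
  rw [hs_def]
  have hα' : (α i) ≠ 0 := hαne i
  field_simp
end
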